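/- arXiv:2211.08705 — 2 statements merged into one kernel-verified Lean document; each statement's English description precedes it below -/
import Mathlib

section
/- For any constants g > 0 and N₀ > 0, the function G(p, B) = B · log₂(1 + g·p/(N₀·B)) is concave on the open positive quadrant {(p, B) ∈ ℝ² : p > 0 and B > 0}. -/
/-!
`G(p, B) = B · h(p / B)` with `h t = log₂ (1 + (g / N₀) t)`, a concave function of `t > 0`,
so `G` is the perspective of `h`. Perspectives of concave functions are concave: for
`w = a t + b u`, the point `w⁻¹ (a x + b y)` is the convex combination of `t⁻¹ x` and `u⁻¹ y`
with weights `a t / w` and `b u / w`, and multiplying the concavity inequality there by `w`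
gives the concavity inequality of the perspective.
-/

open Real Set

theorem Real.concaveOn_logb_Ioi {b : ℝ} (hb : 1 ≤ b) : ConcaveOn ℝ (Ioi 0) (logb b) :=
  (strictConcaveOn_log_Ioi.concaveOn.smul (inv_nonneg.mpr (log_nonneg hb))).congr
    fun x _ => by simp [logb, div_eq_inv_mul]

theorem Real.concaveOn_logb_one_add_mul_Ioi {b c : ℝ} (hb : 1 ≤ b) (hc : 0 ≤ c) :
    ConcaveOn ℝ (Ioi 0) (fun t => logb b (1 + c * t)) := by
  have h := (concaveOn_logb_Ioi hb).comp_affineMap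
    (c • AffineMap.id ℝ ℝ + AffineMap.const ℝ ℝ (1 : ℝ))
  refine (h.subset (fun t ht => ?_) (convex_Ioi 0)).congr fun t _ => ?_
  · simp only [mem_Ioi, AffineMap.coe_add, AffineMap.coe_smul, AffineMap.coe_id,
      AffineMap.coe_const, Function.const_one, mem_preimage, Pi.add_apply, Pi.smul_apply, id_eq,
      smul_eq_mul, Pi.one_apply] at ht ⊢
    positivity
  · simp [add_comm]

theorem perspective_weights {t u a b : ℝ} (ht : 0 < t) (hu : 0 < u) (ha : 0 ≤ a) (hb : 0 ≤ b)
    (hab : a + b = 1) :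
    0 < a * t + b * u ∧ 0 ≤ a * t / (a * t + b * u) ∧ 0 ≤ b * u / (a * t + b * u) ∧
      a * t / (a * t + b * u) + b * u / (a * t + b * u) = 1 := by
  have hw : 0 < a * t + b * u := convex_Ioi (0 : ℝ) ht hu ha hb hab
  exact ⟨hw, by positivity, by positivity, by rw [← add_div, div_self hw.ne']⟩

section Perspective

variable {E β : Type*} [AddCommGroup E] [Module ℝ E]
  [AddCommGroup β] [PartialOrder β] [Module ℝ β] [PosSMulMono ℝ β]

theorem inv_smul_add_smul_eq_combo {t u : ℝ} (ht : t ≠ 0) (hu : u ≠ 0) (a b : ℝ) (x y : E) :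
    (a * t + b * u)⁻¹ • (a • x + b • y) =
      (a * t / (a * t + b * u)) • t⁻¹ • x + (b * u / (a * t + b * u)) • u⁻¹ • y := by
  simp only [smul_add, smul_smul]
  congr 2 <;> field_simp

theorem ConcaveOn.perspective {s : Set E} {f : E → β} (hf : ConcaveOn ℝ s f) :
    ConcaveOn ℝ {z : E × ℝ | 0 < z.2 ∧ z.2⁻¹ • z.1 ∈ s} (fun z => z.2 • f (z.2⁻¹ • z.1)) := by
  constructor
  · rintro ⟨x, t⟩ ⟨ht : 0 < t, hx : t⁻¹ • x ∈ s⟩ ⟨y, u⟩ ⟨hu : 0 < u, hy : u⁻¹ • y ∈ s⟩ a b ha hb hab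
    obtain ⟨hw, hat, hbu, hsum⟩ := perspective_weights ht hu ha hb hab
    refine ⟨hw, ?_⟩
    simp only [Prod.smul_mk, Prod.mk_add_mk, smul_eq_mul]
    rw [inv_smul_add_smul_eq_combo ht.ne' hu.ne']
    exact hf.1 hx hy hat hbu hsum
  · rintro ⟨x, t⟩ ⟨ht : 0 < t, hx : t⁻¹ • x ∈ s⟩ ⟨y, u⟩ ⟨hu : 0 < u, hy : u⁻¹ • y ∈ s⟩ a b ha hb hab
    obtain ⟨hw, hat, hbu, hsum⟩ := perspective_weights ht hu ha hb hab
    simp only [Prod.smul_mk, Prod.mk_add_mk, smul_eq_mul]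
    rw [inv_smul_add_smul_eq_combo ht.ne' hu.ne']
    calc a • t • f (t⁻¹ • x) + b • u • f (u⁻¹ • y)
        = (a * t + b * u) • ((a * t / (a * t + b * u)) • f (t⁻¹ • x) +
            (b * u / (a * t + b * u)) • f (u⁻¹ • y)) := by
          simp only [smul_add, smul_smul]
          congr 2 <;> field_simp
      _ ≤ _ := smul_le_smul_of_nonneg_left (hf.2 hx hy hat hbu hsum) hw.le

end Perspective

/-- For any constants `g > 0` and `N₀ > 0`, the function
`G(p, B) = B · log₂(1 + g·p/(N₀·B))` is concave on the open positive quadrant. -/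
theorem concaveOn_rate_function (g N₀ : ℝ) (hg : 0 < g) (hN₀ : 0 < N₀) :
    ConcaveOn ℝ {x : ℝ × ℝ | 0 < x.1 ∧ 0 < x.2}
      (fun x => x.2 * Real.logb 2 (1 + g * x.1 / (N₀ * x.2))) := by
  have h := (concaveOn_logb_one_add_mul_Ioi one_le_two (div_nonneg hg.le hN₀.le)).perspective
  have hquadrant : {x : ℝ × ℝ | 0 < x.1 ∧ 0 < x.2} = {z | 0 < z.2 ∧ z.2⁻¹ • z.1 ∈ Ioi 0} := by
    ext ⟨p, B⟩
    simp only [mem_ofPred_eq, mem_Ioi, smul_eq_mul]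
    exact ⟨fun ⟨_, hB⟩ => ⟨hB, by positivity⟩,
      fun ⟨hB, h⟩ => ⟨(mul_pos_iff_of_pos_left (inv_pos.mpr hB)).mp h, hB⟩⟩
  rw [hquadrant]
  refine h.congr fun x _ => ?_
  simp only [smul_eq_mul]
  field_simp
end

section
/- Let N ≥ 1 and M ≥ 1 be integers, let S ⊆ ℝ^M be a nonempty convex set, and for each n ∈ {1, …, N} let uₙ : ℝ^M → ℝ be convex and nonnegative on S and Gₙ : ℝ^M → ℝ be concave and strictly positive on S. Let w > 0. Suppose x* ∈ S minimizes the sum of ratios ∑ₙ w·uₙ(x)/Gₙ(x) over S. Define νₙ* = w/Gₙ(x*) and βₙ* = uₙ(x*)/Gₙ(x*) for each n. Then x* minimizes the parametric subtractive objective ∑ₙ νₙ*·(uₙ(x) − βₙ*·Gₙ(x)) over S, and the minimum value of this parametric objective over S equals 0. -/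
/-- Theorem 1 of the paper (after Jong's Lemma 2.1): a minimizer `x*` of a sum of ratios
`∑ₙ w·uₙ/Gₙ` over a nonempty convex set `S` (with `uₙ` convex nonnegative and `Gₙ` concave
positive on `S`) also minimizes the parametric subtractive objective
`∑ₙ νₙ*·(uₙ(x) − βₙ*·Gₙ(x))` over `S`, with `νₙ* = w/Gₙ(x*)`, `βₙ* = uₙ(x*)/Gₙ(x*)`,
and the minimum value of the parametric objective equals `0`. -/
theorem sum_of_ratios_subtractive_form (N M : ℕ) (hN : 1 ≤ N) (hM : 1 ≤ M)
    (S : Set (Fin M → ℝ)) (hSne : S.Nonempty) (hSconv : Convex ℝ S)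
    (u G : Fin N → (Fin M → ℝ) → ℝ)
    (hu_conv : ∀ n, ConvexOn ℝ S (u n))
    (hu_nonneg : ∀ n, ∀ x ∈ S, 0 ≤ u n x)
    (hG_conc : ∀ n, ConcaveOn ℝ S (G n))
    (hG_pos : ∀ n, ∀ x ∈ S, 0 < G n x)
    (w : ℝ) (hw : 0 < w)
    (xstar : Fin M → ℝ) (hxstar : xstar ∈ S)
    (hmin : ∀ x ∈ S, ∑ n, w * u n xstar / G n xstar ≤ ∑ n, w * u n x / G n x) :
    (∀ x ∈ S,
        ∑ n, (w / G n xstar) * (u n xstar - (u n xstar / G n xstar) * G n xstar)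
          ≤ ∑ n, (w / G n xstar) * (u n x - (u n xstar / G n xstar) * G n x)) ∧
    ∑ n, (w / G n xstar) * (u n xstar - (u n xstar / G n xstar) * G n xstar) = 0 := by
  have hG0 : ∀ n, G n xstar ≠ 0 := fun n => (hG_pos n xstar hxstar).ne'
  have hzero : ∑ n, (w / G n xstar) * (u n xstar - (u n xstar / G n xstar) * G n xstar) = 0 := by
    apply Finset.sum_eq_zero
    intro n _
    rw [div_mul_cancel₀ _ (hG0 n)]
    ring
  refine ⟨?_, hzero⟩
  intro x hx
  rw [hzero]
  set t : Fin N → ℝ := fun n => (w / G n xstar) * (u n x - (u n xstar / G n xstar) * G n x)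
    with ht
  show 0 ≤ ∑ n, t n
  set D : ℝ → Fin N → ℝ := fun l n => (1 - l) * G n xstar + l * G n x with hD
  -- key inequality for each λ ∈ (0,1]
  have key : ∀ l : ℝ, 0 < l → l ≤ 1 → 0 ≤ ∑ n, t n * (G n xstar / D l n) := by
    intro l hl0 hl1
    set y : Fin M → ℝ := (1 - l) • xstar + l • x with hy
    have hyS : y ∈ S := hSconv hxstar hx (by linarith) hl0.le (by ring)
    have hDpos : ∀ n, 0 < D l n := by
      intro n
      have h1 : 0 ≤ (1 - l) * G n xstar :=
        mul_nonneg (by linarith) (hG_pos n xstar hxstar).le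
      have h2 : 0 < l * G n x := mul_pos hl0 (hG_pos n x hx)
      simp only [hD]; linarith
    have hstep : ∀ n, w * u n y / G n y ≤ w * ((1 - l) * u n xstar + l * u n x) / D l n := by
      intro n
      have hu_le : u n y ≤ (1 - l) * u n xstar + l * u n x := by
        have := (hu_conv n).2 hxstar hx (by linarith : (0:ℝ) ≤ 1 - l) hl0.le (by ring)
        simpa [smul_eq_mul] using this
      have hG_ge : D l n ≤ G n y := by
        have := (hG_conc n).2 hxstar hx (by linarith : (0:ℝ) ≤ 1 - l) hl0.le (by ring)
        simpa [smul_eq_mul, hD] using this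
      have hnum : 0 ≤ w * ((1 - l) * u n xstar + l * u n x) := by
        apply mul_nonneg hw.le
        have := hu_nonneg n xstar hxstar
        have := hu_nonneg n x hx
        have h1 : 0 ≤ (1 - l) * u n xstar := mul_nonneg (by linarith) (hu_nonneg n xstar hxstar)
        have h2 : 0 ≤ l * u n x := mul_nonneg hl0.le (hu_nonneg n x hx)
        linarith
      exact div_le_div₀ hnum
        (mul_le_mul_of_nonneg_left hu_le hw.le) (hDpos n) hG_ge
    have hsum1 : ∑ n, w * u n xstar / G n xstar ≤
        ∑ n, w * ((1 - l) * u n xstar + l * u n x) / D l n :=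
      le_trans (hmin y hyS) (Finset.sum_le_sum fun n _ => hstep n)
    have hid : ∀ n, w * ((1 - l) * u n xstar + l * u n x) / D l n - w * u n xstar / G n xstar
        = l * (t n * (G n xstar / D l n)) := by
      intro n
      have hD0 : ((1 - l) * G n xstar + l * G n x) ≠ 0 := by
        have := (hDpos n).ne'; simpa [hD] using this
      simp only [hD, ht]
      field_simp [hD0, hG0 n]
      ring
    have hsum2 : 0 ≤ l * ∑ n, t n * (G n xstar / D l n) := by
      have : 0 ≤ ∑ n, (w * ((1 - l) * u n xstar + l * u n x) / D l n
          - w * u n xstar / G n xstar) := by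
        rw [Finset.sum_sub_distrib]
        linarith
      calc (0:ℝ) ≤ ∑ n, (w * ((1 - l) * u n xstar + l * u n x) / D l n
          - w * u n xstar / G n xstar) := this
        _ = ∑ n, l * (t n * (G n xstar / D l n)) := Finset.sum_congr rfl fun n _ => hid n
        _ = l * ∑ n, t n * (G n xstar / D l n) := by rw [Finset.mul_sum]
    nlinarith [hsum2, hl0]
  -- limit as λ → 0⁺
  have htend : Filter.Tendsto (fun l => ∑ n, t n * (G n xstar / D l n))
      (nhdsWithin 0 (Set.Ioi (0:ℝ))) (nhds (∑ n, t n)) := by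
    have : Filter.Tendsto (fun l => ∑ n, t n * (G n xstar / D l n))
        (nhds (0:ℝ)) (nhds (∑ n, t n * (G n xstar / D 0 n))) := by
      apply tendsto_finset_sum
      intro n _
      apply Filter.Tendsto.mul tendsto_const_nhds
      apply Filter.Tendsto.div tendsto_const_nhds
      · apply Filter.Tendsto.add
        · exact (Filter.Tendsto.mul (by exact (continuous_const.sub continuous_id).tendsto 0)
            tendsto_const_nhds)
        · exact (Filter.Tendsto.mul (continuous_id.tendsto 0) tendsto_const_nhds)
      · simp only [hD]
        simpa using hG0 n
    have heq : ∑ n, t n * (G n xstar / D 0 n) = ∑ n, t n := by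
      apply Finset.sum_congr rfl
      intro n _
      simp only [hD]
      rw [show (1 - (0:ℝ)) * G n xstar + 0 * G n x = G n xstar by ring,
        div_self (hG0 n), mul_one]
    rw [heq] at this
    exact this.mono_left nhdsWithin_le_nhds
  refine ge_of_tendsto htend ?_
  filter_upwards [Ioc_mem_nhdsGT_of_mem (Set.mem_Ico.mpr ⟨le_refl 0, one_pos⟩)] with l hl
  exact key l hl.1 hl.2
end
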